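/- arXiv:1207.4736 — 3 statements merged into one kernel-verified Lean document; each statement's English description precedes it below -/
import Mathlib

section
/- Let θ ≥ 0 be a random variable with finite mean on a filtered probability space and let τ be a stopping time with finite mean. Then E[|θ - τ|] = E[∫₀^τ (2 P(θ ≤ t | ℱ_t) - 1) dt] + E[θ]. -/
/-!
For `0 ≤ a, c` one has `∫_{(0,c]} (2·1{a ≤ t} - 1) dt = |a - c| - a`, so the identity holds with
the indicator `1{θ ≤ t}` in place of `P(θ ≤ t | ℱ_t)`. By Fubini, `E[∫_{(0,τ]} F(t) dt]` equals
`∫_{t > 0} E[F(t); t ≤ τ] dt`, and `{t ≤ τ} ∈ ℱ_t` because `τ` is a stopping time; on such a set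
the conditional expectation has the same integral as the indicator itself.
-/

open MeasureTheory Set
open scoped ENNReal

lemma integral_Ioc_two_mul_indicator_Ici_sub_one {a c : ℝ} (ha : 0 ≤ a) (hc : 0 ≤ c) :
    ∫ t in Ioc 0 c, (2 * (Ici a).indicator (fun _ => (1 : ℝ)) t - 1) = |a - c| - a := by
  have hIoc : IntegrableOn (fun _ => (1 : ℝ)) (Ioc 0 c) := integrableOn_const measure_Ioc_lt_top.ne
  have hmeas : volume.real (Ioc 0 c ∩ Ici a) = max (c - a) 0 := by
    have h : (Ioc 0 c ∩ Ici a : Set ℝ) =ᵐ[volume] (Ioc 0 c ∩ Ioi a : Set ℝ) :=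
      (ae_eq_refl _).inter Ioi_ae_eq_Ici.symm
    rw [measureReal_congr h, Ioc_inter_Ioi, max_eq_right ha, Real.volume_real_Ioc]
  rw [integral_sub ((hIoc.indicator measurableSet_Ici).const_mul 2) hIoc, integral_const_mul,
    setIntegral_indicator measurableSet_Ici, setIntegral_const, setIntegral_const, hmeas,
    Real.volume_real_Ioc_of_le hc]
  rcases le_total a c with hac | hca
  · simp [max_eq_left (sub_nonneg.2 hac), abs_of_nonpos (sub_nonpos.2 hac)]; ring
  · simp [max_eq_right (sub_nonpos.2 hca), abs_of_nonneg (sub_nonneg.2 hca)]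

lemma setIntegral_const_mul_condExp_sub_const {α : Type*} {m m₀ : MeasurableSpace α}
    {μ : Measure α} [IsFiniteMeasure μ] (hm : m ≤ m₀) {f : α → ℝ} (hf : Integrable f μ)
    {s : Set α} (hs : MeasurableSet[m] s) (c d : ℝ) :
    ∫ x in s, (c * μ[f | m] x - d) ∂μ = ∫ x in s, (c * f x - d) ∂μ := by
  have hconst : IntegrableOn (fun _ => d) s μ := integrableOn_const (measure_ne_top μ s)
  rw [integral_sub (integrable_condExp.const_mul c).integrableOn hconst,
    integral_sub (hf.const_mul c).integrableOn hconst, integral_const_mul, integral_const_mul,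
    setIntegral_condExp hm hf hs]

section UnderGraph

variable {Ω : Type*} [MeasurableSpace Ω] {P : Measure Ω} {τ : Ω → ℝ}

def underGraph (τ : Ω → ℝ) : Set (ℝ × Ω) := {p | p.1 ∈ Ioc 0 (τ p.2)}

lemma measurableSet_underGraph (hτ : Measurable τ) : MeasurableSet (underGraph τ) :=
  (measurableSet_lt measurable_const measurable_fst).inter
    (measurableSet_le measurable_fst (hτ.comp measurable_snd))

variable [SFinite P]

lemma volume_prod_underGraph_lt_top (hτm : Measurable τ) (hτ : Integrable τ P) :
    volume.prod P (underGraph τ) < ∞ := by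
  rw [Measure.prod_apply_symm (measurableSet_underGraph hτm)]
  calc ∫⁻ ω, volume (Ioc 0 (τ ω)) ∂P = ∫⁻ ω, ENNReal.ofReal (τ ω) ∂P := by simp
    _ ≤ ∫⁻ ω, ‖τ ω‖ₑ ∂P := lintegral_mono fun ω => Real.ofReal_le_enorm (τ ω)
    _ < ∞ := hτ.2

lemma integrableOn_underGraph_of_ae_bound (hτm : Measurable τ) (hτ : Integrable τ P)
    {F : ℝ × Ω → ℝ} (hF : AEStronglyMeasurable F (volume.prod P)) {C : ℝ}
    (hFC : ∀ᵐ p ∂(volume.prod P), ‖F p‖ ≤ C) :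
    IntegrableOn F (underGraph τ) (volume.prod P) :=
  Measure.integrableOn_of_bounded (volume_prod_underGraph_lt_top hτm hτ).ne hF
    (ae_restrict_of_ae hFC)

lemma integral_setIntegral_Ioc_eq_setIntegral_Ioi (hτm : Measurable τ) {F : ℝ × Ω → ℝ}
    (hF : IntegrableOn F (underGraph τ) (volume.prod P)) :
    ∫ ω, (∫ t in Ioc 0 (τ ω), F (t, ω)) ∂P =
      ∫ t in Ioi 0, ∫ ω in {ω | t ≤ τ ω}, F (t, ω) ∂P := by
  have hslice : ∀ t, 0 < t → ∀ ω,
      (underGraph τ).indicator F (t, ω) = {ω | t ≤ τ ω}.indicator (fun ω => F (t, ω)) ω := by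
    intro t ht ω
    simp [underGraph, indicator_apply, ht]
  calc ∫ ω, (∫ t in Ioc 0 (τ ω), F (t, ω)) ∂P
      = ∫ ω, (∫ t, (underGraph τ).indicator F (t, ω)) ∂P := by
        congr 1 with ω
        rw [← integral_indicator measurableSet_Ioc]
        rfl
    _ = ∫ t, ∫ ω, (underGraph τ).indicator F (t, ω) ∂P :=
        integral_integral_swap (f := fun ω t => (underGraph τ).indicator F (t, ω))
          ((integrable_indicator_iff (measurableSet_underGraph hτm)).2 hF).swap
    _ = ∫ t, (Ioi 0).indicator (fun t => ∫ ω in {ω | t ≤ τ ω}, F (t, ω) ∂P) t := by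
        congr 1 with t
        by_cases ht : 0 < t
        · simp only [indicator_of_mem (show t ∈ Ioi 0 from ht), hslice t ht]
          exact integral_indicator (measurableSet_le measurable_const hτm)
        · have hout : ∀ ω, (t, ω) ∉ underGraph τ := fun ω h => ht h.1
          simp [indicator_of_notMem (show t ∉ Ioi 0 from ht), indicator_of_notMem (hout _)]
    _ = _ := integral_indicator measurableSet_Ioi

end UnderGraph

section LevelSetIndicator

variable {Ω : Type*} {m : MeasurableSpace Ω} {P : Measure Ω} {θ τ : Ω → ℝ}

lemma norm_indicator_setOf_le_le_one (θ : Ω → ℝ) (t : ℝ) (ω : Ω) :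
    ‖{ω | θ ω ≤ t}.indicator (fun _ => (1 : ℝ)) ω‖ ≤ 1 :=
  (norm_indicator_le_norm_self _ _).trans_eq norm_one

lemma integrable_indicator_setOf_le [IsFiniteMeasure P] (hθ : AEMeasurable θ P) (t : ℝ) :
    Integrable ({ω | θ ω ≤ t}.indicator fun _ => (1 : ℝ)) P :=
  Integrable.of_bound ((measurable_const.indicator measurableSet_Iic).comp_aemeasurable
    hθ).aestronglyMeasurable 1 (ae_of_all _ (norm_indicator_setOf_le_le_one θ t))

variable [SFinite P]

lemma integrableOn_underGraph_two_mul_indicator_sub_one (hτm : Measurable τ)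
    (hτ : Integrable τ P) (hθ : AEMeasurable θ P) :
    IntegrableOn (fun p : ℝ × Ω => 2 * {ω | θ ω ≤ p.1}.indicator (fun _ => (1 : ℝ)) p.2 - 1)
      (underGraph τ) (volume.prod P) := by
  have hmeas : Measurable fun q : ℝ × ℝ =>
      2 * {q : ℝ × ℝ | q.2 ≤ q.1}.indicator (fun _ => (1 : ℝ)) q - 1 :=
    ((measurable_const.indicator (measurableSet_le measurable_snd measurable_fst)).const_mul
      2).sub_const 1
  refine integrableOn_underGraph_of_ae_bound hτm hτ (hmeas.comp_aemeasurable
    (measurable_fst.aemeasurable.prodMk hθ.comp_snd)).aestronglyMeasurable (C := 1)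
    (ae_of_all _ fun p => ?_)
  simp only [indicator_apply]
  split_ifs <;> norm_num

lemma integrableOn_underGraph_two_mul_condExp_indicator_sub_one (𝒢 : ℝ → MeasurableSpace Ω)
    (hτm : Measurable τ) (hτ : Integrable τ P)
    (hmeas : Measurable fun p : ℝ × Ω =>
      (P[{ω | θ ω ≤ p.1}.indicator (fun _ => (1 : ℝ)) | 𝒢 p.1]) p.2) :
    IntegrableOn (fun p : ℝ × Ω =>
        2 * (P[{ω | θ ω ≤ p.1}.indicator (fun _ => (1 : ℝ)) | 𝒢 p.1]) p.2 - 1)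
      (underGraph τ) (volume.prod P) := by
  have hmeas' := (hmeas.const_mul 2).sub_const 1
  refine integrableOn_underGraph_of_ae_bound hτm hτ hmeas'.aestronglyMeasurable (C := 3) ?_
  refine (Measure.ae_prod_iff_ae_ae (measurableSet_le hmeas'.norm measurable_const)).2
    (ae_of_all _ fun t => ?_)
  have hcond_le : ∀ᵐ ω ∂P, |(P[{ω | θ ω ≤ t}.indicator (fun _ => (1 : ℝ)) | 𝒢 t]) ω| ≤ 1 :=
    ae_bdd_abs_condExp_of_ae_bdd_abs (ae_of_all _ (norm_indicator_setOf_le_le_one θ t))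
  filter_upwards [hcond_le] with ω hω
  rw [Real.norm_eq_abs, abs_le] at *
  constructor <;> linarith [hω.1, hω.2]

end LevelSetIndicator

/-- Let `θ ≥ 0` be a random variable with finite mean on a filtered probability space and let
`τ` be a stopping time with finite mean. Then
`E[|θ - τ|] = E[∫₀^τ (2 P(θ ≤ t | ℱ_t) - 1) dt] + E[θ]`,
where `P(θ ≤ t | ℱ_t)` is the conditional expectation of the indicator of `{θ ≤ t}`
given `ℱ t`, and the integrand process is assumed jointly measurable. -/
theorem stmt1 {Ω : Type*} {m : MeasurableSpace Ω} (P : Measure Ω) [IsProbabilityMeasure P]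
    (ℱ : Filtration ℝ m) (θ τ : Ω → ℝ)
    (hθ0 : ∀ ω, 0 ≤ θ ω) (hτ0 : ∀ ω, 0 ≤ τ ω)
    (hθint : Integrable θ P) (hτint : Integrable τ P)
    (hτ : IsStoppingTime ℱ (fun ω => (τ ω : WithTop ℝ)))
    (hjm : Measurable (fun p : ℝ × Ω =>
      (P[Set.indicator {ω' : Ω | θ ω' ≤ p.1} (fun _ => (1:ℝ)) | ℱ p.1]) p.2)) :
    ∫ ω, |θ ω - τ ω| ∂P =
      (∫ ω, (∫ t in Set.Ioc (0:ℝ) (τ ω),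
        (2 * (P[Set.indicator {ω' : Ω | θ ω' ≤ t} (fun _ => (1:ℝ)) | ℱ t]) ω - 1)) ∂P)
      + ∫ ω, θ ω ∂P := by
  have hτm : Measurable τ := by simpa using hτ.measurable'.untopA
  have hcompensator : (∫ ω, (∫ t in Ioc 0 (τ ω),
        (2 * (P[{ω' | θ ω' ≤ t}.indicator (fun _ => (1 : ℝ)) | ℱ t]) ω - 1)) ∂P)
      = ∫ ω, (|θ ω - τ ω| - θ ω) ∂P := calc
    _ = ∫ t in Ioi 0, ∫ ω in {ω | t ≤ τ ω},
          (2 * (P[{ω' | θ ω' ≤ t}.indicator (fun _ => (1 : ℝ)) | ℱ t]) ω - 1) ∂P :=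
        integral_setIntegral_Ioc_eq_setIntegral_Ioi hτm
          (integrableOn_underGraph_two_mul_condExp_indicator_sub_one _ hτm hτint hjm)
    _ = ∫ t in Ioi 0, ∫ ω in {ω | t ≤ τ ω},
          (2 * {ω' | θ ω' ≤ t}.indicator (fun _ => (1 : ℝ)) ω - 1) ∂P :=
        setIntegral_congr_fun measurableSet_Ioi fun t _ =>
          setIntegral_const_mul_condExp_sub_const (ℱ.le t)
            (integrable_indicator_setOf_le hθint.aemeasurable t)
            (by simpa using hτ.measurableSet_ge t) 2 1
    _ = ∫ ω, (∫ t in Ioc 0 (τ ω), (2 * {ω' | θ ω' ≤ t}.indicator (fun _ => (1 : ℝ)) ω - 1)) ∂P :=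
        (integral_setIntegral_Ioc_eq_setIntegral_Ioi hτm
          (integrableOn_underGraph_two_mul_indicator_sub_one hτm hτint hθint.aemeasurable)).symm
    _ = ∫ ω, (|θ ω - τ ω| - θ ω) ∂P := by
        congr 1 with ω
        exact integral_Ioc_two_mul_indicator_Ici_sub_one (hθ0 ω) (hτ0 ω)
  rw [hcompensator, integral_sub (f := fun ω => |θ ω - τ ω|) (hθint.sub hτint).abs hθint,
    sub_add_cancel]
end

section
/- Let X be a Lévy process that is not a compound Poisson process and drifts to −∞, so that X̄_∞ = sup_{t≥0} X_t < ∞ a.s. Then P(X̄_∞ = 0) > 0 if and only if X is irregular upwards, i.e. if and only if inf{t > 0 : X_t > 0} > 0 almost surely. -/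
open MeasureTheory ProbabilityTheory Filter Set
open scoped NNReal ENNReal

/-- A (minimal encoding of a) Lévy process indexed by `ℝ≥0`, started at `0`: each coordinate is
measurable, paths are right-continuous, increments are stationary, and each increment
`X_t − X_s` is independent of the σ-algebra generated by the past `(X_u)_{u ≤ s}`. -/
structure IsLevy {Ω : Type*} [MeasurableSpace Ω] (P : Measure Ω) (X : ℝ≥0 → Ω → ℝ) : Prop where
  measurable : ∀ t, Measurable (X t)
  start : ∀ ω, X 0 ω = 0
  stationary : ∀ s t : ℝ≥0,
    Measure.map (fun ω => X (t + s) ω - X t ω) P = Measure.map (X s) P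
  indep : ∀ s t : ℝ≥0, s ≤ t →
    Indep (MeasurableSpace.comap (fun ω => X t ω - X s ω) inferInstance)
      (⨆ u ∈ Set.Iic s, MeasurableSpace.comap (X u) inferInstance) P
  rightCont : ∀ ω t, ContinuousWithinAt (fun u => X u ω) (Set.Ici t) t

/-- `X` drifts to `−∞` almost surely. -/
def DriftsToNegInfty {Ω : Type*} [MeasurableSpace Ω] (P : Measure Ω)
    (X : ℝ≥0 → Ω → ℝ) : Prop :=
  ∀ᵐ ω ∂P, Tendsto (fun t => X t ω) atTop atBot

/-- `X` is a compound Poisson process.  For a Lévy process this is equivalent to the law of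
`X_t` having an atom at `0` for some (equivalently, all) `t > 0`, which is the encoding used
here. -/
def IsCompoundPoisson {Ω : Type*} [MeasurableSpace Ω] (P : Measure Ω)
    (X : ℝ≥0 → Ω → ℝ) : Prop :=
  ∃ t : ℝ≥0, 0 < t ∧ 0 < P {ω | X t ω = 0}

/-!
Restarted at a fixed time `t`, a Lévy process gives the process `s ↦ X (t + s) - X t`, which has
the law of `X` on path space and is independent of the past `ℱ t`: the finite-dimensional laws
agree by induction on the number of times, and a finite measure on path space is determined by
them. Consequently an event lying in every `ℱ s`, `s > 0`, is independent of itself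
(Blumenthal's 0-1 law), and upward irregularity is such an event.

If `P (X̄_∞ = 0) > 0`, then, `X` being a.s. bounded above, the paths with `X̄_∞ = 0` are `≤ 0`,
hence irregular, so irregularity has positive probability and therefore probability one.
Conversely, if `X` is a.s. irregular and `X_h ≠ 0` a.s., then for some `h, γ > 0` the block event
`{X ≤ 0 on (0, h), X_h ≤ -γ}` has positive probability. By the Markov property, `K` consecutive
such blocks followed by a restarted path bounded by `c ≤ K γ` form an event of probability
`P(block)^K · P(path ≤ c) > 0`, on which `X ≤ 0` throughout, i.e. `X̄_∞ = 0`.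

Events are taken over a countable dense set of times, so that they are measurable; right
continuity recovers the remaining times.
-/

open scoped Topology

lemma le_of_forall_mem_dense {f : ℝ≥0 → ℝ} {u : ℝ≥0} (hf : ContinuousWithinAt f (Ici u) u)
    {D : Set ℝ≥0} (hD : Dense D) {a b : ℝ≥0} {c : ℝ} (h : ∀ q ∈ D, q ∈ Ioo a b → f q ≤ c)
    (hu : u ∈ Ico a b) : f u ≤ c := by
  refine isClosed_Iic.mem_of_frequently_of_tendsto ?_ (hf.mono Ioi_subset_Ici_self).tendsto
  have hfreq : ∃ᶠ q in 𝓝[>] u, q ∈ D := by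
    refine frequently_iff.2 fun hU => ?_
    obtain ⟨v, hv, hsub⟩ := mem_nhdsGT_iff_exists_Ioo_subset.1 hU
    obtain ⟨q, hqD, hq⟩ := hD.exists_between hv
    exact ⟨q, hsub hq, hqD⟩
  exact (hfreq.and_eventually (Ioo_mem_nhdsGT_of_mem hu)).mono fun q hq => h q hq.1 hq.2

lemma continuousWithinAt_shift {f : ℝ≥0 → ℝ} (hf : ∀ t, ContinuousWithinAt f (Ici t) t)
    (a u : ℝ≥0) : ContinuousWithinAt (fun s => f (a + s) - f a) (Ici u) u :=
  ((hf (a + u)).comp (continuous_const_add a).continuousWithinAt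
    fun _ hs => by simpa using hs).sub continuousWithinAt_const

lemma nonpos_of_blocks {f : ℝ≥0 → ℝ} (hf : ∀ t, ContinuousWithinAt f (Ici t) t)
    (hf0 : f 0 = 0) {D : Set ℝ≥0} (hD : Dense D) {h : ℝ≥0} {γ c : ℝ} {K : ℕ} (hγ : 0 ≤ γ)
    (hK : c ≤ K * γ)
    (hblock : ∀ i < K, (∀ q ∈ D ∩ Ioo 0 h, f (i * h + q) - f (i * h) ≤ 0) ∧
      f (i * h + h) - f (i * h) ≤ -γ)
    (htail : ∀ q ∈ D, f (K * h + q) - f (K * h) ≤ c) (t : ℝ≥0) : f t ≤ 0 := by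
  have hstep : ∀ i ≤ K, f (i * h) ≤ -(i * γ) ∧ ∀ t < i * h, f t ≤ 0 := by
    intro i
    induction i with
    | zero => simp [hf0]
    | succ i ih =>
      intro hi
      obtain ⟨hval, hbefore⟩ := ih (by omega)
      obtain ⟨hinside, hend⟩ := hblock i (by omega)
      have hcast : ((i + 1 : ℕ) : ℝ≥0) * h = i * h + h := by push_cast; ring
      refine ⟨by rw [hcast]; push_cast; linarith, fun t ht => ?_⟩
      rcases lt_or_ge t (i * h) with hlt | hle
      · exact hbefore t hlt
      have hu : t - i * h ∈ Ico 0 h := ⟨zero_le, (tsub_lt_iff_left hle).2 (hcast ▸ ht)⟩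
      have := le_of_forall_mem_dense (continuousWithinAt_shift hf (i * h) _) hD
        (fun q hqD hq => hinside q ⟨hqD, hq⟩) hu
      rw [add_tsub_cancel_of_le hle] at this
      have : (0 : ℝ) ≤ i * γ := by positivity
      linarith
  obtain ⟨hval, hbefore⟩ := hstep K le_rfl
  rcases lt_or_ge t (K * h) with hlt | hle
  · exact hbefore t hlt
  have := le_of_forall_mem_dense (continuousWithinAt_shift hf (K * h) _) hD
    (fun q hqD _ => htail q hqD) (b := t - K * h + 1) ⟨zero_le, lt_add_one _⟩
  rw [add_tsub_cancel_of_le hle] at this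
  linarith

lemma measurableSet_forall_mem_le {α ι : Type*} {m : MeasurableSpace α} {S : Set ι}
    (hS : S.Countable) {f : ι → α → ℝ} (hf : ∀ i ∈ S, Measurable (f i)) (c : ℝ) :
    MeasurableSet {x | ∀ i ∈ S, f i x ≤ c} := by
  simp only [ofPred_forall]
  exact .biInter hS fun i hi => measurableSet_le (hf i hi) measurable_const

lemma exists_measure_ne_zero_of_ae_exists {Ω ι : Type*} {m : MeasurableSpace Ω}
    {μ : Measure Ω} [NeZero μ] [Countable ι] {S : ι → Set Ω} (h : ∀ᵐ ω ∂μ, ∃ i, ω ∈ S i) :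
    ∃ i, μ (S i) ≠ 0 := by
  by_contra! h0
  have hnot : ∀ᵐ ω ∂μ, ω ∉ ⋃ i, S i :=
    measure_eq_zero_iff_ae_notMem.1 (measure_iUnion_null h0)
  have : ∀ᵐ ω ∂μ, False :=
    (h.and hnot).mono fun ω ⟨⟨i, hi⟩, hn⟩ => hn (mem_iUnion.2 ⟨i, hi⟩)
  exact NeZero.ne μ (ae_eq_bot.1 (eventually_false_iff_eq_bot.1 this))

def irregularUpwards {Ω : Type*} (X : ℝ≥0 → Ω → ℝ) : Set Ω :=
  {ω | ∃ ε : ℝ≥0, 0 < ε ∧ ∀ s : ℝ≥0, 0 < s → s < ε → X s ω ≤ 0}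

lemma exists_measure_nonpos_on_Ioo_ne_zero {Ω : Type*} {mΩ : MeasurableSpace Ω}
    {μ : Measure Ω} [NeZero μ] {X : ℝ≥0 → Ω → ℝ}
    (hnull : ∀ t : ℝ≥0, 0 < t → μ {ω | X t ω = 0} = 0)
    (hirr : ∀ᵐ ω ∂μ, ω ∈ irregularUpwards X) :
    ∃ (h : ℝ≥0) (γ : ℝ), 0 < γ ∧ μ {ω | (∀ s ∈ Ioo 0 h, X s ω ≤ 0) ∧ X h ω ≤ -γ} ≠ 0 := by
  have hne : ∀ᵐ ω ∂μ, ∀ n : ℕ, X (1 / (n + 1)) ω ≠ 0 :=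
    ae_all_iff.2 fun n => measure_eq_zero_iff_ae_notMem.1 (hnull _ (by positivity))
  obtain ⟨⟨n, c⟩, h⟩ := exists_measure_ne_zero_of_ae_exists
    (S := fun p : ℕ × ℕ => {ω | (∀ s ∈ Ioo 0 (1 / ((p.1 : ℝ≥0) + 1)), X s ω ≤ 0) ∧
      X (1 / ((p.1 : ℝ≥0) + 1)) ω ≤ -(1 / ((p.2 : ℝ) + 1))}) (by
    filter_upwards [hirr, hne] with ω ⟨ε, hε, hle⟩ hω
    obtain ⟨n, hn⟩ := exists_nat_one_div_lt hε
    have hneg : X (1 / (n + 1)) ω < 0 := (hle _ (by positivity) hn).lt_of_ne (hω n)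
    obtain ⟨c, hc⟩ := exists_nat_one_div_lt (neg_pos.2 hneg)
    exact ⟨(n, c), fun s hs => hle s hs.1 (hs.2.trans hn), by linarith⟩)
  exact ⟨_, _, by positivity, h⟩

noncomputable def shiftProcess {Ω : Type*} (X : ℝ≥0 → Ω → ℝ) (t s : ℝ≥0) (ω : Ω) : ℝ :=
  X (t + s) ω - X t ω

lemma shiftProcess_fin_eq_comp {Ω : Type*} (X : ℝ≥0 → Ω → ℝ) {n : ℕ} {s : Fin (n + 1) → ℝ≥0}
    (hs : Monotone s) (t : ℝ≥0) :
    (fun ω j => shiftProcess X t (s j) ω)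
      = (fun p : ℝ × (Fin n → ℝ) => (Fin.cons p.1 fun j => p.1 + p.2 j : Fin (n + 1) → ℝ)) ∘
        fun ω => (shiftProcess X t (s 0) ω,
          fun j => shiftProcess X (t + s 0) (s j.succ - s 0) ω) := by
  funext ω j
  cases j using Fin.cases with
  | zero => rfl
  | succ j =>
    simp only [Function.comp, Fin.cons_succ, shiftProcess]
    rw [add_assoc, add_tsub_cancel_of_le (hs (Fin.zero_le j.succ))]
    ring

lemma comap_shiftPath_le {Ω : Type*} (X : ℝ≥0 → Ω → ℝ) {s s' : ℝ≥0} (h : s ≤ s') :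
    MeasurableSpace.comap (fun ω v => shiftProcess X s' v ω) MeasurableSpace.pi
      ≤ MeasurableSpace.comap (fun ω v => shiftProcess X s v ω) MeasurableSpace.pi := by
  have : (fun ω v => shiftProcess X s' v ω)
      = (fun (y : ℝ≥0 → ℝ) v => y (s' - s + v) - y (s' - s)) ∘
          fun ω v => shiftProcess X s v ω := by
    funext ω v
    simp [shiftProcess, ← add_assoc, add_tsub_cancel_of_le h]
  rw [this, ← MeasurableSpace.comap_comp]
  exact MeasurableSpace.comap_mono (Measurable.comap_le
    (measurable_pi_lambda _ fun v => (measurable_pi_apply _).sub (measurable_pi_apply _)))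

namespace IsLevy

variable {Ω : Type*} {mΩ : MeasurableSpace Ω} {P : Measure Ω} {X : ℝ≥0 → Ω → ℝ}

noncomputable def filtration (hX : IsLevy P X) : Filtration ℝ≥0 mΩ :=
  Filtration.natural X fun t => (hX.measurable t).stronglyMeasurable

lemma measurable_filtration (hX : IsLevy P X) {u t : ℝ≥0} (h : u ≤ t) :
    Measurable[hX.filtration t] (X u) :=
  ((Filtration.stronglyAdapted_natural _ u).mono (hX.filtration.mono h)).measurable

lemma measurable_shiftProcess (hX : IsLevy P X) (t s : ℝ≥0) :
    Measurable (shiftProcess X t s) :=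
  (hX.measurable _).sub (hX.measurable _)

lemma measurable_shiftProcess_of_le (hX : IsLevy P X) {t s h : ℝ≥0} (hs : s ≤ h) :
    Measurable[hX.filtration (t + h)] (shiftProcess X t s) :=
  (hX.measurable_filtration (u := t + s) (by gcongr)).sub
    (hX.measurable_filtration (u := t) le_self_add)

lemma measurable_path (hX : IsLevy P X) : Measurable fun ω s => X s ω :=
  measurable_pi_lambda _ hX.measurable

lemma measurable_shiftPath (hX : IsLevy P X) (t : ℝ≥0) :
    Measurable fun ω s => shiftProcess X t s ω :=
  measurable_pi_lambda _ (hX.measurable_shiftProcess t)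

lemma shiftProcess_zero (hX : IsLevy P X) : shiftProcess X 0 = X := by
  funext s ω
  simp [shiftProcess, hX.start]

lemma map_restrict_shiftProcess (hX : IsLevy P X) {t : ℝ≥0} {C : Set Ω}
    (hC : MeasurableSet[hX.filtration t] C) (s : ℝ≥0) :
    (P.restrict C).map (shiftProcess X t s) = P C • P.map (X s) := by
  have hm := hX.measurable_shiftProcess t s
  have hlaw : P.map (X s) = P.map (shiftProcess X t s) := (hX.stationary s t).symm
  ext A hA
  rw [Measure.map_apply hm hA, Measure.restrict_apply (hm hA), Measure.smul_apply, hlaw,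
    Measure.map_apply hm hA, smul_eq_mul, mul_comm]
  exact (Indep_iff _ _ _).1 (hX.indep t (t + s) le_self_add) _ C ⟨A, hA, rfl⟩ hC

lemma map_restrict_shiftProcess_prod [IsFiniteMeasure P] (hX : IsLevy P X) {β : Type*}
    [MeasurableSpace β] {Z : Ω → β} (hZ : Measurable Z) {ν : Measure β} [SigmaFinite ν] {t a : ℝ≥0}
    (hZν : ∀ {C : Set Ω}, MeasurableSet[hX.filtration (t + a)] C → (P.restrict C).map Z = P C • ν)
    {C : Set Ω} (hC : MeasurableSet[hX.filtration t] C) :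
    (P.restrict C).map (fun ω => (shiftProcess X t a ω, Z ω))
      = ((P.restrict C).map (shiftProcess X t a)).prod ν := by
  have hpair := (hX.measurable_shiftProcess t a).prodMk hZ
  refine (Measure.prod_eq fun A B hA hB => ?_).symm
  have hA' := hX.measurable_shiftProcess t a hA
  have h := DFunLike.congr_fun (hZν ((hX.filtration.mono le_self_add _ hC).inter
    (hX.measurable_shiftProcess_of_le le_rfl hA))) B
  rw [Measure.smul_apply, smul_eq_mul, Measure.map_apply hZ hB,
    Measure.restrict_apply (hZ hB)] at h
  rw [Measure.map_apply hpair (hA.prod hB), Measure.map_apply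
    (hX.measurable_shiftProcess t a) hA, Measure.restrict_apply (hpair (hA.prod hB)),
    Measure.restrict_apply hA', inter_comm (shiftProcess X t a ⁻¹' A), ← h]
  congr 1
  ext ω
  simp only [mem_inter_iff, mem_preimage, mem_prod]
  tauto

lemma measurableSet_iInter_shiftPath_preimage (hX : IsLevy P X) {h : ℝ≥0}
    {B : Set (ℝ≥0 → ℝ)}
    (hBh : ∀ t, MeasurableSet[hX.filtration (t + h)] ((fun ω s => shiftProcess X t s ω) ⁻¹' B))
    (a : ℝ≥0) (k : ℕ) :
    MeasurableSet[hX.filtration (a + k * h)]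
      (⋂ i < k, (fun ω s => shiftProcess X (a + i * h) s ω) ⁻¹' B) := by
  refine .iInter fun i => .iInter fun hi => hX.filtration.mono ?_ _ (hBh _)
  have : (i : ℝ≥0) + 1 ≤ k := by exact_mod_cast hi
  calc a + i * h + h = a + (i + 1) * h := by ring
    _ ≤ a + k * h := by gcongr

lemma measurable_iSup_comap_shiftPath (hX : IsLevy P X) {s : ℕ → ℝ≥0}
    (hs : Tendsto s atTop (𝓝 0)) (u : ℝ≥0) :
    Measurable[⨆ k, MeasurableSpace.comap (fun ω v => shiftProcess X (s k) v ω)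
      MeasurableSpace.pi] (X u) := by
  -- `X u = lim (X (max (s k) u) - X (s k))` by right continuity, and `X 0 = 0`
  refine @measurable_of_tendsto_metrizable _ _ (_) _ _ _ _
    (fun k => shiftProcess X (s k) (u - s k)) _ (fun k => ?_) (tendsto_pi_nhds.2 fun ω => ?_)
  · exact ((measurable_pi_apply (u - s k)).comp (comap_measurable _)).mono
      (le_iSup (fun k => MeasurableSpace.comap (fun ω v => shiftProcess X (s k) v ω)
        MeasurableSpace.pi) k) le_rfl
  · have hmax : Tendsto (fun k => X (max (s k) u) ω) atTop (𝓝 (X u ω)) :=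
      (hX.rightCont ω u).tendsto.comp (tendsto_nhdsWithin_iff.2
        ⟨by simpa using hs.max tendsto_const_nhds,
          .of_forall fun k => show u ≤ _ from le_max_right _ _⟩)
    have hzero : Tendsto (fun k => X (s k) ω) atTop (𝓝 (X 0 ω)) :=
      (hX.rightCont ω 0).tendsto.comp (tendsto_nhdsWithin_iff.2
        ⟨hs, .of_forall fun k => mem_Ici.2 zero_le⟩)
    simpa [shiftProcess, add_tsub_eq_max, hX.start] using hmax.sub hzero

lemma measurableSet_irregularUpwards (hX : IsLevy P X) {s : ℝ≥0} (hs : 0 < s) :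
    MeasurableSet[hX.filtration s] (irregularUpwards X) := by
  obtain ⟨D, hDc, hDd⟩ := TopologicalSpace.exists_countable_dense ℝ≥0
  have hunion : irregularUpwards X
      = ⋃ n : ℕ, {ω | ∀ q ∈ D ∩ Ioo 0 (s / (n + 1)), X q ω ≤ 0} := by
    ext ω
    constructor
    · rintro ⟨ε, hε, hle⟩
      obtain ⟨n, hn⟩ := exists_nat_one_div_lt (div_pos hε hs)
      have hn' : s / (n + 1) < ε := by
        rwa [lt_div_iff₀ hs, one_div, ← div_eq_inv_mul] at hn
      exact mem_iUnion.2 ⟨n, fun q hq => hle q hq.2.1 (hq.2.2.trans hn')⟩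
    · intro hω
      obtain ⟨n, hn⟩ := mem_iUnion.1 hω
      exact ⟨s / (n + 1), by positivity, fun u hu huε => le_of_forall_mem_dense
        (hX.rightCont ω u) hDd (fun q hqD hq => hn q ⟨hqD, hq⟩) ⟨hu.le, huε⟩⟩
  rw [hunion]
  exact .iUnion fun n => measurableSet_forall_mem_le (hDc.mono inter_subset_left)
    (fun q hq => hX.measurable_filtration (hq.2.2.le.trans (div_le_self zero_le (by simp)))) 0

variable [IsProbabilityMeasure P]

lemma map_restrict_shiftProcess_fin (hX : IsLevy P X) :
    ∀ {n : ℕ} (s : Fin n → ℝ≥0), Monotone s →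
    ∀ {t : ℝ≥0} {C : Set Ω}, MeasurableSet[hX.filtration t] C →
    (P.restrict C).map (fun ω j => shiftProcess X t (s j) ω)
      = P C • P.map (fun ω j => X (s j) ω)
  | 0, s, _, t, C, hC => by
    ext A hA
    rcases A.eq_empty_or_nonempty with rfl | ⟨x, hx⟩
    · simp
    · obtain rfl : A = univ := eq_univ_of_forall fun y => Subsingleton.elim x y ▸ hx
      simp [Measure.map_apply (measurable_of_subsingleton_codomain _)]
  | n + 1, s, hs, t, C, hC => by
    set s' : Fin n → ℝ≥0 := fun j => s j.succ - s 0
    have hs' : Monotone s' := fun i j hij =>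
      tsub_le_tsub_right (hs (Fin.succ_le_succ_iff.2 hij)) _
    set Ψ : ℝ × (Fin n → ℝ) → (Fin (n + 1) → ℝ) := fun p => Fin.cons p.1 fun j => p.1 + p.2 j
    have hΨ : Measurable Ψ := by
      refine measurable_pi_iff.2 fun j => ?_
      cases j using Fin.cases <;> simp only [Ψ, Fin.cons_zero, Fin.cons_succ] <;> fun_prop
    have key {t : ℝ≥0} {C : Set Ω} (hC : MeasurableSet[hX.filtration t] C) :
        (P.restrict C).map (fun ω j => shiftProcess X t (s j) ω)
          = P C • ((P.map (X (s 0))).prod (P.map fun ω j => X (s' j) ω)).map Ψ := by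
      have hZ : Measurable fun ω j => shiftProcess X (t + s 0) (s' j) ω :=
        measurable_pi_lambda _ fun j => hX.measurable_shiftProcess _ _
      rw [shiftProcess_fin_eq_comp X hs t,
        ← Measure.map_map hΨ ((hX.measurable_shiftProcess t (s 0)).prodMk hZ),
        hX.map_restrict_shiftProcess_prod hZ
          (fun hC' => map_restrict_shiftProcess_fin hX s' hs' hC') hC,
        hX.map_restrict_shiftProcess hC, Measure.prod_smul_left, Measure.map_smul]
    -- at `t = 0`, `C = univ` the left-hand side of `key` is the law of `(X (s j))_j`
    have h0 := key (t := 0) (C := univ) MeasurableSet.univ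
    simp only [Measure.restrict_univ, measure_univ, one_smul, hX.shiftProcess_zero] at h0
    rw [key hC, h0]

lemma map_restrict_shiftPath (hX : IsLevy P X) {t : ℝ≥0} {C : Set Ω}
    (hC : MeasurableSet[hX.filtration t] C) :
    (P.restrict C).map (fun ω s => shiftProcess X t s ω) = P C • P.map (fun ω s => X s ω) := by
  have hfin (I : Finset ℝ≥0) : (P.restrict C).map (fun ω (j : I) => shiftProcess X t j ω)
      = P C • P.map (fun ω (j : I) => X j ω) := by
    set e := I.orderIsoOfFin rfl
    set R : (Fin I.card → ℝ) → (I → ℝ) := fun v j => v (e.symm j)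
    have hR : Measurable R := measurable_pi_lambda _ fun j => measurable_pi_apply _
    have hY (Y : ℝ≥0 → Ω → ℝ) : (fun ω (j : I) => Y j ω) = R ∘ fun ω k => Y (e k) ω := by
      funext ω j
      simp [R]
    rw [hY, hY, ← Measure.map_map hR
        (measurable_pi_lambda _ fun k => hX.measurable_shiftProcess _ _),
      ← Measure.map_map hR (measurable_pi_lambda _ fun k => hX.measurable _),
      hX.map_restrict_shiftProcess_fin _ (fun i j h => e.monotone h) hC, Measure.map_smul]
  refine IsProjectiveLimit.unique
    (P := fun I => ((P.restrict C).map fun ω s => shiftProcess X t s ω).map I.restrict)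
    (fun I => rfl) (fun I => ?_)
  dsimp only
  rw [Measure.map_smul, Measure.map_map (Finset.measurable_restrict I) hX.measurable_path,
    Measure.map_map (Finset.measurable_restrict I) (hX.measurable_shiftPath t)]
  exact (hfin I).symm

lemma measure_inter_shiftPath_preimage (hX : IsLevy P X) {t : ℝ≥0} {C : Set Ω}
    (hC : MeasurableSet[hX.filtration t] C) {B : Set (ℝ≥0 → ℝ)} (hB : MeasurableSet B) :
    P (C ∩ (fun ω s => shiftProcess X t s ω) ⁻¹' B) = P C * P ((fun ω s => X s ω) ⁻¹' B) := by
  have h := DFunLike.congr_fun (hX.map_restrict_shiftPath hC) B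
  rwa [Measure.map_apply (hX.measurable_shiftPath t) hB,
    Measure.restrict_apply (hX.measurable_shiftPath t hB), Measure.smul_apply,
    Measure.map_apply hX.measurable_path hB, smul_eq_mul, inter_comm] at h

lemma measure_shiftPath_preimage (hX : IsLevy P X) (t : ℝ≥0) {B : Set (ℝ≥0 → ℝ)}
    (hB : MeasurableSet B) :
    P ((fun ω s => shiftProcess X t s ω) ⁻¹' B) = P ((fun ω s => X s ω) ⁻¹' B) := by
  simpa using hX.measure_inter_shiftPath_preimage (C := univ) MeasurableSet.univ hB

lemma indep_comap_shiftPath (hX : IsLevy P X) (t : ℝ≥0) :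
    Indep (MeasurableSpace.comap (fun ω s => shiftProcess X t s ω) MeasurableSpace.pi)
      (hX.filtration t) P := by
  refine (Indep_iff _ _ _).2 ?_
  rintro _ C ⟨B, hB, rfl⟩ hC
  rw [inter_comm, hX.measure_inter_shiftPath_preimage hC hB,
    hX.measure_shiftPath_preimage t hB, mul_comm]

lemma measure_iInter_shiftPath_preimage (hX : IsLevy P X) {h : ℝ≥0} {B : Set (ℝ≥0 → ℝ)}
    (hB : MeasurableSet B)
    (hBh : ∀ t, MeasurableSet[hX.filtration (t + h)] ((fun ω s => shiftProcess X t s ω) ⁻¹' B))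
    (a : ℝ≥0) (k : ℕ) :
    P (⋂ i < k, (fun ω s => shiftProcess X (a + i * h) s ω) ⁻¹' B)
      = P ((fun ω s => X s ω) ⁻¹' B) ^ k := by
  induction k with
  | zero => simp
  | succ k ih =>
    rw [Set.biInter_lt_succ, hX.measure_inter_shiftPath_preimage
      (hX.measurableSet_iInter_shiftPath_preimage hBh a k) hB, ih, pow_succ]

theorem measure_eq_zero_or_one_of_forall_pos_measurableSet (hX : IsLevy P X) {A : Set Ω}
    (hA : ∀ s, 0 < s → MeasurableSet[hX.filtration s] A) : P A = 0 ∨ P A = 1 := by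
  set s : ℕ → ℝ≥0 := fun k => 1 / ((k : ℝ≥0) + 1)
  have hs_lim : Tendsto s atTop (𝓝 0) := tendsto_one_div_add_atTop_nhds_zero_nat
  set G : ℕ → MeasurableSpace Ω :=
    fun k => MeasurableSpace.comap (fun ω v => shiftProcess X (s k) v ω) MeasurableSpace.pi
  set mA := MeasurableSpace.generateFrom {A}
  have hmA (k : ℕ) : mA ≤ hX.filtration (s k) :=
    MeasurableSpace.generateFrom_le fun _ hB => hB ▸ hA _ (by positivity)
  have hG_mono : Monotone G := fun i j hij =>
    comap_shiftPath_le X (show s j ≤ s i by simp only [s]; gcongr)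
  have hindep : Indep (⨆ k, G k) mA P :=
    indep_iSup_of_directed_le (fun k => indep_of_indep_of_le_right
      (hX.indep_comap_shiftPath _) (hmA k)) (fun k => (hX.measurable_shiftPath _).comap_le)
      ((hmA 0).trans (hX.filtration.le _)) hG_mono.directed_le
  have hle : mA ≤ ⨆ k, G k :=
    (hmA 0).trans (iSup₂_le fun u _ => (hX.measurable_iSup_comap_shiftPath hs_lim u).comap_le)
  exact measure_eq_zero_or_one_of_indep_self (indep_of_indep_of_le_left hindep hle)
    (MeasurableSpace.measurableSet_generateFrom rfl)

lemma measure_preimage_bounded_eq_one (hX : IsLevy P X) (hdrift : DriftsToNegInfty P X)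
    {S : Set ℝ≥0} (hS : S.Countable) (hS1 : S ⊆ Iic 1) :
    P ((fun ω s => X s ω) ⁻¹' ⋃ K : ℕ, {y | ∀ q ∈ S, y q ≤ K}) = 1 := by
  set B : Set (ℝ≥0 → ℝ) := ⋃ K : ℕ, {y | ∀ q ∈ S, y q ≤ K}
  have hB : MeasurableSet B :=
    .iUnion fun K => measurableSet_forall_mem_le hS (fun q _ => measurable_pi_apply q) _
  have hBh (t : ℝ≥0) :
      MeasurableSet[hX.filtration (t + 1)] ((fun ω s => shiftProcess X t s ω) ⁻¹' B) := by
    rw [preimage_iUnion]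
    exact .iUnion fun K => measurableSet_forall_mem_le hS
      (fun q hq => hX.measurable_shiftProcess_of_le (hS1 hq)) _
  by_contra hne
  have hlt : P ((fun ω s => X s ω) ⁻¹' B) < 1 := lt_of_le_of_ne prob_le_one hne
  -- past a time `a` after which `X ≤ 0`, every increment over `[a + i, a + i + 1]` is bounded
  have hae : ∀ᵐ ω ∂P, ∃ a : ℕ, ω ∈ ⋂ i : ℕ, (fun ω s => shiftProcess X (a + i) s ω) ⁻¹' B := by
    refine Eventually.mono hdrift fun ω hω => ?_
    obtain ⟨N, hN⟩ := eventually_atTop.1 (hω.eventually (eventually_le_atBot 0))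
    refine ⟨⌈N⌉₊, mem_iInter.2 fun i => mem_iUnion.2 ⟨⌈-X (⌈N⌉₊ + i) ω⌉₊, fun q _ => ?_⟩⟩
    have h1 := hN (⌈N⌉₊ + i + q) ((Nat.le_ceil N).trans (le_add_right le_self_add))
    have h2 := Nat.le_ceil (-X (⌈N⌉₊ + i) ω)
    simp only [shiftProcess]
    linarith
  obtain ⟨a, ha⟩ := exists_measure_ne_zero_of_ae_exists hae
  refine ha (nonpos_iff_eq_zero.1 (ge_of_tendsto'
    (ENNReal.tendsto_pow_atTop_nhds_zero_of_lt_one hlt) fun k => ?_))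
  rw [← hX.measure_iInter_shiftPath_preimage hB hBh a k]
  simp only [mul_one]
  exact measure_mono (iInter_mono fun i => subset_iInter fun _ => subset_rfl)

lemma ae_bddAbove (hX : IsLevy P X) (hdrift : DriftsToNegInfty P X) :
    ∀ᵐ ω ∂P, BddAbove (range fun t => X t ω) := by
  obtain ⟨D, hDc, hDd⟩ := TopologicalSpace.exists_countable_dense ℝ≥0
  have hblocks : ∀ᵐ ω ∂P, ∀ j : ℕ, ∃ K : ℕ, ∀ q ∈ D ∩ Iic 1, shiftProcess X j q ω ≤ K := by
    refine ae_all_iff.2 fun j => ?_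
    have hB : MeasurableSet (⋃ K : ℕ, {y : ℝ≥0 → ℝ | ∀ q ∈ D ∩ Iic 1, y q ≤ K}) :=
      .iUnion fun K => measurableSet_forall_mem_le (hDc.mono inter_subset_left)
        (fun q _ => measurable_pi_apply q) _
    have h1 := (hX.measure_shiftPath_preimage j hB).trans
      (hX.measure_preimage_bounded_eq_one hdrift (hDc.mono inter_subset_left) inter_subset_right)
    filter_upwards [mem_ae_iff.2 ((prob_compl_eq_zero_iff (hX.measurable_shiftPath j hB)).2 h1)]
      with ω hω using mem_iUnion.1 hω
  filter_upwards [hblocks, hdrift] with ω hω hωd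
  obtain ⟨N, hN⟩ := eventually_atTop.1 (hωd.eventually (eventually_le_atBot 0))
  choose K hK using hω
  refine ⟨∑ j ∈ Finset.range ⌈N⌉₊, |X j ω + K j|, forall_mem_range.2 fun t => ?_⟩
  rcases le_or_gt N t with hNt | htN
  · exact (hN t hNt).trans (Finset.sum_nonneg fun j _ => abs_nonneg _)
  set j := ⌊t⌋₊
  have hj : (j : ℝ≥0) ≤ t := Nat.floor_le zero_le
  have hjN : j < ⌈N⌉₊ := by exact_mod_cast hj.trans_lt (htN.trans_le (Nat.le_ceil N))
  have hu : t - j ∈ Ico 0 1 := ⟨zero_le, (tsub_lt_iff_left hj).2 (Nat.lt_floor_add_one t)⟩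
  have := le_of_forall_mem_dense (continuousWithinAt_shift (hX.rightCont ω) j _) hDd
    (fun q hqD hq => hK j q ⟨hqD, hq.2.le⟩) hu
  rw [add_tsub_cancel_of_le hj] at this
  calc X t ω ≤ X j ω + K j := by linarith
    _ ≤ |X j ω + K j| := le_abs_self _
    _ ≤ _ := Finset.single_le_sum (f := fun j : ℕ => |X j ω + K j|) (fun j _ => abs_nonneg _)
      (Finset.mem_range.2 hjN)

-- `⨆` of a family that is not bounded above is `0`, hence the need for `ae_bddAbove`.
lemma measure_iSup_eq_zero_le_irregularUpwards (hX : IsLevy P X)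
    (hdrift : DriftsToNegInfty P X) :
    P {ω | (⨆ t, X t ω) = 0} ≤ P (irregularUpwards X) :=
  measure_mono_ae <| (hX.ae_bddAbove hdrift).mono fun _ hb hω =>
    ⟨1, one_pos, fun s _ _ => (le_ciSup hb s).trans (le_of_eq hω)⟩

lemma measure_iSup_eq_zero_pos_of_block (hX : IsLevy P X) {D : Set ℝ≥0} (hDc : D.Countable)
    (hDd : Dense D) {h : ℝ≥0} {γ c : ℝ} (hγ : 0 < γ)
    (hblock : P ((fun ω s => X s ω) ⁻¹' ({y | ∀ q ∈ D ∩ Ioo 0 h, y q ≤ 0} ∩ {y | y h ≤ -γ})) ≠ 0)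
    (htail : P ((fun ω s => X s ω) ⁻¹' {y | ∀ q ∈ D, y q ≤ c}) ≠ 0) :
    0 < P {ω | (⨆ t, X t ω) = 0} := by
  set Block : Set (ℝ≥0 → ℝ) := {y | ∀ q ∈ D ∩ Ioo 0 h, y q ≤ 0} ∩ {y | y h ≤ -γ}
  set Tail : Set (ℝ≥0 → ℝ) := {y | ∀ q ∈ D, y q ≤ c}
  have hBlock : MeasurableSet Block :=
    (measurableSet_forall_mem_le (hDc.mono inter_subset_left) (fun q _ => measurable_pi_apply q)
      0).inter (measurableSet_le (measurable_pi_apply h) measurable_const)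
  have hBlock_h (t : ℝ≥0) :
      MeasurableSet[hX.filtration (t + h)] ((fun ω s => shiftProcess X t s ω) ⁻¹' Block) :=
    (measurableSet_forall_mem_le (hDc.mono inter_subset_left)
      (fun q hq => hX.measurable_shiftProcess_of_le hq.2.2.le) 0).inter
      (measurableSet_le (hX.measurable_shiftProcess_of_le le_rfl) measurable_const)
  have hTail : MeasurableSet Tail :=
    measurableSet_forall_mem_le hDc (fun q _ => measurable_pi_apply q) _
  set K := ⌈c / γ⌉₊
  have hK : c ≤ K * γ := (div_le_iff₀ hγ).1 (Nat.le_ceil _)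
  set E := (⋂ i < K, (fun ω s => shiftProcess X (0 + i * h) s ω) ⁻¹' Block) ∩
    (fun ω s => shiftProcess X (0 + K * h) s ω) ⁻¹' Tail
  have hE : P E = P ((fun ω s => X s ω) ⁻¹' Block) ^ K * P ((fun ω s => X s ω) ⁻¹' Tail) := by
    rw [hX.measure_inter_shiftPath_preimage
      (hX.measurableSet_iInter_shiftPath_preimage hBlock_h 0 K) hTail,
      hX.measure_iInter_shiftPath_preimage hBlock hBlock_h 0 K]
  have hEpos : 0 < P E := hE ▸ ENNReal.mul_pos (pow_ne_zero _ hblock) htail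
  refine hEpos.trans_le (measure_mono fun ω hω => ?_)
  obtain ⟨hωB, hωT⟩ := hω
  simp only [zero_add] at hωB hωT
  have hle : ∀ t, X t ω ≤ 0 := nonpos_of_blocks (hX.rightCont ω) (hX.start ω) hDd hγ.le hK
    (fun i hi => mem_iInter₂.1 hωB i hi) hωT
  exact le_antisymm (ciSup_le hle)
    ((hX.start ω).symm.le.trans (le_ciSup ⟨0, forall_mem_range.2 hle⟩ 0))

lemma measure_iSup_eq_zero_pos (hX : IsLevy P X)
    (hnull : ∀ t : ℝ≥0, 0 < t → P {ω | X t ω = 0} = 0) (hdrift : DriftsToNegInfty P X)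
    (hirr : ∀ᵐ ω ∂P, ω ∈ irregularUpwards X) : 0 < P {ω | (⨆ t, X t ω) = 0} := by
  obtain ⟨D, hDc, hDd⟩ := TopologicalSpace.exists_countable_dense ℝ≥0
  obtain ⟨h, γ, hγ, hblock⟩ := exists_measure_nonpos_on_Ioo_ne_zero hnull hirr
  obtain ⟨c, hc⟩ := exists_measure_ne_zero_of_ae_exists (S := fun c : ℕ => {ω | ∀ t, X t ω ≤ c})
    ((hX.ae_bddAbove hdrift).mono fun ω ⟨b, hb⟩ =>
      ⟨⌈b⌉₊, fun t => (hb ⟨t, rfl⟩).trans (Nat.le_ceil b)⟩)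
  refine hX.measure_iSup_eq_zero_pos_of_block hDc hDd (h := h) (c := c) hγ
    (fun h0 => hblock (measure_mono_null ?_ h0)) (fun h0 => hc (measure_mono_null ?_ h0))
  · exact fun ω hω => ⟨fun q hq => hω.1 q hq.2, hω.2⟩
  · exact fun ω hω q _ => hω q

end IsLevy

/-- For a Lévy process `X`, not compound Poisson, drifting to `−∞` (so
`X̄_∞ = sup_{t ≥ 0} X_t < ∞` a.s.), the law of `X̄_∞` has an atom at `0` if and only if `X` is
irregular upwards, i.e. `inf{t > 0 : X_t > 0} > 0` a.s. (equivalently: a.s. there is `ε > 0`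
with `X_s ≤ 0` for all `s ∈ (0, ε)`). -/
theorem stmt5 {Ω : Type*} {mΩ : MeasurableSpace Ω} (P : Measure Ω) [IsProbabilityMeasure P]
    (X : ℝ≥0 → Ω → ℝ) (hX : IsLevy P X)
    (hncp : ¬ IsCompoundPoisson P X)
    (hdrift : DriftsToNegInfty P X) :
    0 < P {ω | (⨆ t, X t ω) = 0} ↔
      ∀ᵐ ω ∂P, ∃ ε : ℝ≥0, 0 < ε ∧ ∀ s : ℝ≥0, 0 < s → s < ε → X s ω ≤ 0 := by
  have hnull (t : ℝ≥0) (ht : 0 < t) : P {ω | X t ω = 0} = 0 :=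
    not_not.1 fun h => hncp ⟨t, ht, pos_iff_ne_zero.2 h⟩
  have hmeas : MeasurableSet (irregularUpwards X) :=
    hX.filtration.le 1 _ (hX.measurableSet_irregularUpwards one_pos)
  refine ⟨fun hpos => ?_, hX.measure_iSup_eq_zero_pos hnull hdrift⟩
  refine mem_ae_iff.2 ((prob_compl_eq_zero_iff hmeas).2 ?_)
  exact (hX.measure_eq_zero_or_one_of_forall_pos_measurableSet
    fun s hs => hX.measurableSet_irregularUpwards hs).resolve_left
    (hpos.trans_le (hX.measure_iSup_eq_zero_le_irregularUpwards hdrift)).ne'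
end

section
/- For a Brownian motion with drift X_t = σB_t + μt with σ > 0 and μ < 0, the equation e^{−2μy/σ²} − 1 + (4μ/σ²) y = 0 has a unique solution y* in (0, ∞), and y* > (σ²/(−2μ)) log 2. -/
/-!
Put `a = -2μ/σ²` and `t = a y`: the equation becomes `exp t - 1 = 2 t`, so everything reduces to
the roots of `exp t - 1 = c t` for `c = 2`. Strict convexity of `exp` makes the secant slope
`(exp t - 1) / t` strictly increasing, so there is at most one positive root; it exists by the
intermediate value theorem, and it exceeds `log c` because `exp t - 1 < t exp t`.
-/

open Real Set

lemma exp_sub_one_lt_mul_exp {t : ℝ} (ht : t ≠ 0) : exp t - 1 < t * exp t := by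
  have h := mul_lt_mul_of_pos_right (add_one_lt_exp (neg_ne_zero.2 ht)) (exp_pos t)
  rw [← exp_add, neg_add_cancel, exp_zero] at h
  linarith

lemma strictMonoOn_exp_sub_one_div : StrictMonoOn (fun t => (exp t - 1) / t) (Ioi 0) := by
  intro x hx y hy hxy
  simpa using strictConvexOn_exp.secant_strict_mono (mem_univ 0) (mem_univ x) (mem_univ y)
    (ne_of_gt hx) (ne_of_gt hy) hxy

lemma log_lt_of_exp_sub_one_eq_mul {c t : ℝ} (ht : 0 < t) (h : exp t - 1 = c * t) :
    log c < t := by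
  have hct : c * t < exp t * t := by
    rw [← h, mul_comm (exp t)]
    exact exp_sub_one_lt_mul_exp ht.ne'
  have hc_lt : c < exp t := lt_of_mul_lt_mul_right hct ht.le
  have hc_pos : 0 < c := by
    have := add_one_lt_exp ht.ne'
    nlinarith
  exact (log_lt_iff_lt_exp hc_pos).2 hc_lt

lemma exists_pos_exp_sub_one_eq_mul {c : ℝ} (hc : 1 < c) : ∃ t, 0 < t ∧ exp t - 1 = c * t := by
  have hlog_pos : 0 < log c := log_pos hc
  have hlog_le : log c ≤ 2 * c := by linarith [log_le_sub_one_of_pos (zero_lt_one.trans hc)]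
  have h_left : exp (log c) - 1 - c * log c < 0 := by
    have := exp_sub_one_lt_mul_exp hlog_pos.ne'
    rw [exp_log (zero_lt_one.trans hc)] at this ⊢
    linarith
  have h_right : 0 < exp (2 * c) - 1 - c * (2 * c) := by
    nlinarith [quadratic_le_exp_of_nonneg (show 0 ≤ 2 * c by linarith)]
  obtain ⟨t, ht, hroot⟩ := intermediate_value_Ioo hlog_le
    (by fun_prop : Continuous fun t => exp t - 1 - c * t).continuousOn ⟨h_left, h_right⟩
  exact ⟨t, hlog_pos.trans ht.1, sub_eq_zero.1 hroot⟩

lemma existsUnique_pos_exp_sub_one_eq_mul {c : ℝ} (hc : 1 < c) :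
    ∃! t, 0 < t ∧ exp t - 1 = c * t := by
  obtain ⟨t, ht, hroot⟩ := exists_pos_exp_sub_one_eq_mul hc
  refine ⟨t, ⟨ht, hroot⟩, fun s ⟨hs, hsroot⟩ => strictMonoOn_exp_sub_one_div.injOn hs ht ?_⟩
  simp only [hsroot, hroot, mul_div_cancel_right₀ _ hs.ne', mul_div_cancel_right₀ _ ht.ne']

/-- For a Brownian motion with drift `X_t = σB_t + μt`, `σ > 0`, `μ < 0`, the equation
`e^{−2μy/σ²} − 1 + (4μ/σ²) y = 0` has a unique solution `y*` in `(0, ∞)`, and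
`y* > (σ²/(−2μ)) log 2` (the median of the exponential law of the ultimate supremum). -/
theorem stmt12 (σ μ : ℝ) (hσ : 0 < σ) (hμ : μ < 0) :
    (∃! y : ℝ, 0 < y ∧ Real.exp (-(2 * μ * y / σ ^ 2)) - 1 + (4 * μ / σ ^ 2) * y = 0) ∧
    ∀ y : ℝ, 0 < y → Real.exp (-(2 * μ * y / σ ^ 2)) - 1 + (4 * μ / σ ^ 2) * y = 0 →
      (σ ^ 2 / (-(2 * μ))) * Real.log 2 < y := by
  set a : ℝ := -(2 * μ) / σ ^ 2 with ha_def
  have ha : 0 < a := div_pos (by linarith) (by positivity)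
  have equation_iff (y : ℝ) :
      exp (-(2 * μ * y / σ ^ 2)) - 1 + (4 * μ / σ ^ 2) * y = 0 ↔ exp (a * y) - 1 = 2 * (a * y) := by
    have hexp : -(2 * μ * y / σ ^ 2) = a * y := by rw [ha_def]; ring
    have hlin : (4 * μ / σ ^ 2) * y = -(2 * (a * y)) := by rw [ha_def]; ring
    rw [hexp, hlin, ← sub_eq_add_neg, sub_eq_zero]
  simp only [equation_iff]
  obtain ⟨t, ⟨ht, hroot⟩, huniq⟩ := existsUnique_pos_exp_sub_one_eq_mul one_lt_two
  refine ⟨⟨t / a, ⟨div_pos ht ha, by rwa [mul_div_cancel₀ _ ha.ne']⟩, ?_⟩, ?_⟩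
  · rintro y ⟨hy, hyroot⟩
    rw [eq_div_iff ha.ne', mul_comm]
    exact huniq (a * y) ⟨mul_pos ha hy, hyroot⟩
  · intro y hy hyroot
    have hlog := log_lt_of_exp_sub_one_eq_mul (mul_pos ha hy) hyroot
    rwa [show σ ^ 2 / -(2 * μ) = a⁻¹ by rw [ha_def, inv_div], inv_mul_lt_iff₀ ha]
end
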